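/- For every integer d ≥ 1, the principal eigenvalue λ_{2^d−1} of the bricklayer's graph G_{2^d−1} is a root of the polynomial f_d(d, λ). -/

import Mathlib

/-!
The graph `G_{2^d-1}` is the `d`-cube with the all-ones vertex deleted. Its adjacency matrix is
symmetric and nonnegative, so `λ = λ_{2^d-1}` has a nonnegative eigenvector `y ≠ 0`. Summing
`A y = λ y` over the vertices of Hamming weight `w < d` gives, for the level sums `S w`,
`λ S w = (d - w + 1) S (w - 1) + (w + 1) S (w + 1)`, whence `w! S w = f_w(d, λ) S 0`.
Level `d` consists of the deleted vertex only, so `f_d(d, λ) S 0 = 0`, and `S 0 ≠ 0` because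
otherwise every `S w` vanishes and the nonnegative `y` would be zero.
-/

/-- The bricklayer's graph `G_n`: vertices `0, …, n-1`, adjacent iff their binary
expansions differ in exactly one bit (i.e. their XOR is a power of two). -/
def bricklayerGraph (n : ℕ) : SimpleGraph (Fin n) where
  Adj u v := ∃ k : ℕ, (u.val ^^^ v.val) = 2 ^ k
  symm := by
    constructor
    rintro u v ⟨k, h⟩
    exact ⟨k, by rwa [Nat.xor_comm]⟩
  loopless := by
    constructor
    rintro u ⟨k, h⟩
    rw [Nat.xor_self] at h
    exact (pow_ne_zero k (two_ne_zero)) h.symm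

noncomputable instance (n : ℕ) : DecidableRel (bricklayerGraph n).Adj :=
  Classical.decRel _

/-- `λ_n`: the principal (largest) eigenvalue of the adjacency matrix of `G_n` over ℝ. -/
noncomputable def bricklayerLambda (n : ℕ) : ℝ :=
  sSup (spectrum ℝ ((bricklayerGraph n).adjMatrix ℝ))

/-- The polynomials `f_k(d, λ)`: `f_1 = λ`, `f_2 = λ² - d`, and
`f_k = λ·f_{k-1} - (k-1)(d-k+2)·f_{k-2}` for `k ≥ 3`. -/
noncomputable def fPoly (d : ℝ) : ℕ → Polynomial ℝ
  | 0 => 1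
  | 1 => Polynomial.X
  | 2 => Polynomial.X ^ 2 - Polynomial.C d
  | (m + 3) =>
      Polynomial.X * fPoly d (m + 2) -
        Polynomial.C ((((m : ℝ) + 3) - 1) * (d - ((m : ℝ) + 3) + 2)) * fPoly d (m + 1)

open Finset Matrix Polynomial
open scoped Nat

namespace Matrix

variable {n : Type*} [Fintype n] {A : Matrix n n ℝ}

lemma dotProduct_mulVec_le_abs (hA : ∀ i j, 0 ≤ A i j) (x : n → ℝ) :
    x ⬝ᵥ A *ᵥ x ≤ |x| ⬝ᵥ A *ᵥ |x| := by
  simp only [dotProduct, mulVec, mul_sum, Pi.abs_apply]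
  refine sum_le_sum fun i _ => sum_le_sum fun j _ => ?_
  calc x i * (A i j * x j) ≤ |x i * (A i j * x j)| := le_abs_self _
    _ = |x i| * (A i j * |x j|) := by rw [abs_mul, abs_mul, abs_of_nonneg (hA i j)]

variable [DecidableEq n]

lemma IsHermitian.sSup_spectrum_mem [Nonempty n] (hA : A.IsHermitian) :
    sSup (spectrum ℝ A) ∈ spectrum ℝ A :=
  (hA.spectrum_real_eq_range_eigenvalues ▸ Set.range_nonempty _).csSup_mem A.finite_real_spectrum

lemma IsHermitian.posSemidef_sSup_spectrum_smul_one_sub (hA : A.IsHermitian) :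
    (sSup (spectrum ℝ A) • 1 - A).PosSemidef := by
  refine posSemidef_iff_isHermitian_and_spectrum_nonneg.mpr ⟨?_, ?_⟩
  · exact (isHermitian_one.smul (IsSelfAdjoint.all _)).sub hA
  · rw [← Algebra.algebraMap_eq_smul_one, ← spectrum.singleton_sub_eq]
    rintro _ ⟨_, rfl, μ, hμ, rfl⟩
    exact sub_nonneg.mpr (le_csSup A.finite_real_spectrum.bddAbove hμ)

/-- Replacing `x` by `|x|` can only increase `x ⬝ᵥ A *ᵥ x`, which `x` already maximizes. -/
lemma mulVec_abs_eq_smul (hA : ∀ i j, 0 ≤ A i j) {μ : ℝ} (hμ : (μ • 1 - A).PosSemidef)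
    {x : n → ℝ} (hx : A *ᵥ x = μ • x) : A *ᵥ |x| = μ • |x| := by
  have hform : ∀ y : n → ℝ, y ⬝ᵥ (μ • 1 - A) *ᵥ y = μ * (y ⬝ᵥ y) - y ⬝ᵥ A *ᵥ y := fun y => by
    rw [sub_mulVec, dotProduct_sub, smul_mulVec, one_mulVec, dotProduct_smul, smul_eq_mul]
  have habs : |x| ⬝ᵥ |x| = x ⬝ᵥ x := by simp [dotProduct, abs_mul_abs_self]
  have hzero : |x| ⬝ᵥ (μ • 1 - A) *ᵥ |x| = 0 := by
    refine le_antisymm ?_ (by simpa using hμ.dotProduct_mulVec_nonneg |x|)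
    rw [hform, habs, ← smul_eq_mul, ← dotProduct_smul, ← hx]
    exact sub_nonpos.mpr (dotProduct_mulVec_le_abs hA x)
  have := (hμ.dotProduct_mulVec_zero_iff |x|).mp (by simpa using hzero)
  rwa [sub_mulVec, smul_mulVec, one_mulVec, sub_eq_zero, eq_comm] at this

theorem IsHermitian.exists_nonneg_mulVec_eq_sSup_spectrum_smul [Nonempty n] (hA : A.IsHermitian)
    (hA₀ : ∀ i j, 0 ≤ A i j) :
    ∃ y : n → ℝ, y ≠ 0 ∧ 0 ≤ y ∧ A *ᵥ y = sSup (spectrum ℝ A) • y := by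
  obtain ⟨i, hi⟩ : sSup (spectrum ℝ A) ∈ Set.range hA.eigenvalues :=
    hA.spectrum_real_eq_range_eigenvalues ▸ hA.sSup_spectrum_mem
  have hv : ⇑(hA.eigenvectorBasis i) ≠ 0 :=
    (WithLp.ofLp_eq_zero 2).ne.2 <| hA.eigenvectorBasis.orthonormal.ne_zero i
  refine ⟨|⇑(hA.eigenvectorBasis i)|, by simpa using hv, abs_nonneg _,
    mulVec_abs_eq_smul hA₀ hA.posSemidef_sSup_spectrum_smul_one_sub ?_⟩
  rw [hA.mulVec_eigenvectorBasis, hi]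

end Matrix

def bitWeight (d u : ℕ) : ℕ := #{i ∈ range d | u.testBit i}

section BitWeight

variable {d u : ℕ}

lemma bitWeight_le : bitWeight d u ≤ d :=
  (card_filter_le _ _).trans (card_range d).le

lemma bitWeight_eq_iff (hu : u < 2 ^ d) : bitWeight d u = d ↔ u = 2 ^ d - 1 := by
  have hall : bitWeight d u = d ↔ ∀ i < d, u.testBit i := by
    simpa [bitWeight] using card_filter_eq_iff (s := range d) (p := fun i => u.testBit i)
  refine hall.trans ⟨fun h => Nat.eq_of_testBit_eq fun i => ?_, ?_⟩
  · rw [Nat.testBit_two_pow_sub_one]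
    by_cases hi : i < d
    · simpa [hi] using h i hi
    · have : u < 2 ^ i := hu.trans_le (Nat.pow_le_pow_right two_pos (not_lt.mp hi))
      simp [hi, Nat.testBit_eq_false_of_lt this]
  · rintro rfl i hi
    simpa using hi

lemma bitWeight_lt_iff (hu : u < 2 ^ d) : bitWeight d u < d ↔ u < 2 ^ d - 1 := by
  have := bitWeight_eq_iff hu
  have : bitWeight d u ≤ d := bitWeight_le
  omega

lemma bitWeight_xor_two_pow_of_testBit_eq_false {k : ℕ} (hk : k < d) (hu : u.testBit k = false) :
    bitWeight d (u ^^^ 2 ^ k) = bitWeight d u + 1 := by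
  have : {i ∈ range d | (u ^^^ 2 ^ k).testBit i} = insert k {i ∈ range d | u.testBit i} := by
    ext i
    obtain rfl | hi := eq_or_ne i k
    · simp [Nat.testBit_two_pow, hu, hk]
    · simp [Nat.testBit_xor, Nat.testBit_two_pow, hi, hi.symm]
  rw [bitWeight, this, card_insert_of_notMem (by simp [hu]), bitWeight]

lemma bitWeight_xor_two_pow_of_testBit_eq_true {k : ℕ} (hk : k < d) (hu : u.testBit k = true) :
    bitWeight d (u ^^^ 2 ^ k) + 1 = bitWeight d u := by
  have : {i ∈ range d | (u ^^^ 2 ^ k).testBit i} = {i ∈ range d | u.testBit i}.erase k := by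
    ext i
    obtain rfl | hi := eq_or_ne i k
    · simp [Nat.testBit_two_pow, hu]
    · simp [Nat.testBit_xor, Nat.testBit_two_pow, hi, hi.symm]
  rw [bitWeight, this, card_erase_add_one (by simp [hu, hk]), bitWeight]

lemma card_filter_bitWeight_xor_two_pow (u w : ℕ) :
    #{k ∈ range d | bitWeight d (u ^^^ 2 ^ k) = w} =
      if w = bitWeight d u + 1 then d - bitWeight d u
      else if w + 1 = bitWeight d u then bitWeight d u else 0 := by
  have flip : ∀ k ∈ range d, (bitWeight d (u ^^^ 2 ^ k) = w ↔
      if u.testBit k then w + 1 = bitWeight d u else w = bitWeight d u + 1) := by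
    intro k hk
    cases hb : u.testBit k
    · have := bitWeight_xor_two_pow_of_testBit_eq_false (mem_range.mp hk) hb
      simp only [Bool.false_eq_true, if_false]; omega
    · have := bitWeight_xor_two_pow_of_testBit_eq_true (mem_range.mp hk) hb
      simp only [if_true]; omega
  split_ifs with h₁ h₂
  · have hne : ¬ w + 1 = bitWeight d u := by omega
    have := card_filter_add_card_filter_not (s := range d) (fun k => u.testBit k = true)
    rw [card_range] at this
    rw [filter_congr (q := fun k => ¬ u.testBit k = true) fun k hk => by
      rw [flip k hk]; cases u.testBit k <;> simp <;> omega]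
    rw [bitWeight] at *
    omega
  · rw [filter_congr (q := fun k => u.testBit k = true) fun k hk => by
      rw [flip k hk]; cases u.testBit k <;> simp <;> omega]
    rfl
  · simp only [filter_congr flip]
    simp [h₁, h₂]

end BitWeight

namespace SimpleGraph

variable {V R : Type*} [Fintype V] [NonAssocSemiring R] (G : SimpleGraph V) [DecidableRel G.Adj]

lemma sum_adjMatrix_mulVec (s : Finset V) (y : V → R) :
    ∑ u ∈ s, (G.adjMatrix R *ᵥ y) u = ∑ v, (#{u ∈ s | G.Adj u v} : R) * y v := by
  simp only [Matrix.mulVec, dotProduct, sum_comm (s := s), ← sum_mul]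
  refine sum_congr rfl fun v _ => ?_
  rw [← sum_boole]
  simp [adjMatrix_apply]

end SimpleGraph

lemma bricklayerGraph_adj_iff {n d : ℕ} (hn : n ≤ 2 ^ d) (u v : Fin n) :
    (bricklayerGraph n).Adj u v ↔ ∃ k < d, (v : ℕ) ^^^ 2 ^ k = u := by
  constructor
  · rintro ⟨k, h⟩
    have : 2 ^ k < 2 ^ d := h ▸ Nat.xor_lt_two_pow (u.2.trans_le hn) (v.2.trans_le hn)
    refine ⟨k, (Nat.pow_lt_pow_iff_right one_lt_two).mp this, ?_⟩
    rw [← h, xor_xor_cancel_comm_assoc]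
  · rintro ⟨k, -, h⟩
    exact ⟨k, by rw [← h, xor_xor_cancel_comm]⟩

lemma card_bricklayerGraph_adj_bitWeight_eq {d w : ℕ} (hw : w < d) (v : Fin (2 ^ d - 1)) :
    #{u : Fin (2 ^ d - 1) | bitWeight d u = w ∧ (bricklayerGraph (2 ^ d - 1)).Adj u v} =
      #{k ∈ range d | bitWeight d ((v : ℕ) ^^^ 2 ^ k) = w} := by
  have hv : (v : ℕ) < 2 ^ d := v.2.trans_le (Nat.sub_le _ _)
  symm
  refine card_bij (fun k hk => ⟨(v : ℕ) ^^^ 2 ^ k, ?_⟩) (fun k hk => ?_) (fun k₁ _ k₂ _ h => ?_)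
    (fun u hu => ?_)
  · simp only [mem_filter, mem_range] at hk
    have := Nat.xor_lt_two_pow hv (Nat.pow_lt_pow_right one_lt_two hk.1)
    exact (bitWeight_lt_iff this).mp (hk.2 ▸ hw)
  · simp only [mem_filter, mem_range] at hk
    simpa [hk.2] using (bricklayerGraph_adj_iff (Nat.sub_le _ _) _ v).mpr ⟨k, hk.1, rfl⟩
  · simpa using Nat.pow_right_injective le_rfl (Nat.xor_right_inj.mp (Fin.mk.inj_iff.mp h))
  · simp only [mem_filter, mem_univ, true_and] at hu
    obtain ⟨k, hk, he⟩ := (bricklayerGraph_adj_iff (Nat.sub_le _ _) u v).mp hu.2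
    exact ⟨k, by simp [hk, he, hu.1], Fin.ext he⟩

def levelSum (d : ℕ) {n : ℕ} (y : Fin n → ℝ) (w : ℕ) : ℝ :=
  ∑ u ∈ {u : Fin n | bitWeight d u = w}, y u

section LevelSum

variable {d n : ℕ}

lemma sum_ite_bitWeight_mul (y : Fin n → ℝ) (j : ℕ) (c : ℝ) :
    ∑ v : Fin n, (if bitWeight d v = j then c else 0) * y v = c * levelSum d y j := by
  simp [levelSum, ite_mul, sum_ite, mul_sum]

lemma levelSum_eq_zero_of_le (y : Fin (2 ^ d - 1) → ℝ) {w : ℕ} (hw : d ≤ w) :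
    levelSum d y w = 0 := by
  refine sum_eq_zero fun u hu => absurd ((mem_filter.mp hu).2 ▸ ?_) (not_lt.mpr hw)
  exact (bitWeight_lt_iff (u.2.trans_le (Nat.sub_le _ _))).mpr u.2

lemma eq_zero_of_levelSum_eq_zero {y : Fin n → ℝ} (hy : 0 ≤ y) (h : ∀ w, levelSum d y w = 0) :
    y = 0 := by
  ext u
  have := (sum_eq_zero_iff_of_nonneg fun v _ => hy v).mp (h (bitWeight d u))
  simpa using this u

variable {y : Fin (2 ^ d - 1) → ℝ} {μ : ℝ}
  (hy : (bricklayerGraph (2 ^ d - 1)).adjMatrix ℝ *ᵥ y = μ • y)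
include hy

lemma mul_levelSum_eq_sum {w : ℕ} (hw : w < d) :
    μ * levelSum d y w =
      ∑ v : Fin (2 ^ d - 1), (#{k ∈ range d | bitWeight d ((v : ℕ) ^^^ 2 ^ k) = w} : ℝ) * y v := by
  have := (bricklayerGraph (2 ^ d - 1)).sum_adjMatrix_mulVec {u | bitWeight d u = w} y
  simp only [hy, filter_filter, card_bricklayerGraph_adj_bitWeight_eq hw] at this
  rw [← this, levelSum, mul_sum]
  simp

lemma mul_levelSum_zero (hd : 1 ≤ d) : μ * levelSum d y 0 = levelSum d y 1 := by
  rw [mul_levelSum_eq_sum hy hd, ← one_mul (levelSum d y 1), ← sum_ite_bitWeight_mul]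
  refine sum_congr rfl fun v _ => ?_
  rw [card_filter_bitWeight_xor_two_pow]
  split_ifs <;> first | omega | simp_all

lemma mul_levelSum_succ {m : ℕ} (hm : m + 1 < d) :
    μ * levelSum d y (m + 1) =
      (d - m) * levelSum d y m + (m + 2) * levelSum d y (m + 2) := by
  rw [mul_levelSum_eq_sum hy hm, ← sum_ite_bitWeight_mul, ← sum_ite_bitWeight_mul,
    ← sum_add_distrib]
  refine sum_congr rfl fun v _ => ?_
  rw [card_filter_bitWeight_xor_two_pow, ← add_mul]
  congr 1
  generalize bitWeight d v = b
  split_ifs <;> first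
    | omega
    | (subst_vars; rw [Nat.cast_sub (by omega)]; ring)
    | (subst_vars; push_cast; ring)

end LevelSum

lemma fPoly_add_two (d : ℝ) (m : ℕ) :
    fPoly d (m + 2) = X * fPoly d (m + 1) - C ((m + 1) * (d - m)) * fPoly d m := by
  rcases m with _ | m
  · simp [fPoly, sq]
  · rw [fPoly]
    push_cast
    ring_nf

lemma factorial_mul_eq_eval_fPoly_mul {d μ : ℝ} {N : ℕ} {S : ℕ → ℝ} (h₀ : μ * S 0 = S 1)
    (h : ∀ m, m + 1 < N → μ * S (m + 1) = (d - m) * S m + (m + 2) * S (m + 2)) :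
    ∀ w ≤ N, (w ! : ℝ) * S w = (fPoly d w).eval μ * S 0 := by
  intro w
  induction w using Nat.twoStepInduction with
  | zero => simp [fPoly]
  | one => simp [fPoly, h₀]
  | more m ih₀ ih₁ =>
    intro hm
    have hrec := h m (by omega)
    rw [fPoly_add_two, eval_sub, eval_mul, eval_mul, eval_X, eval_C, sub_mul, mul_assoc,
      mul_assoc, ← ih₀ (by omega), ← ih₁ (by omega), Nat.factorial_succ, Nat.factorial_succ]
    push_cast
    linear_combination (-(m + 1) * (m ! : ℝ)) * hrec

/-- `λ_{2^d - 1}` is a root of the polynomial `f_d(d, λ)`. -/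
theorem bricklayer_lambda_isRoot_fPoly (d : ℕ) (hd : 1 ≤ d) :
    (fPoly (d : ℝ) d).IsRoot (bricklayerLambda (2 ^ d - 1)) := by
  have : Nonempty (Fin (2 ^ d - 1)) :=
    ⟨⟨0, Nat.sub_pos_of_lt (Nat.one_lt_two_pow (by omega))⟩⟩
  let G := bricklayerGraph (2 ^ d - 1)
  obtain ⟨y, hy₀, hy_nonneg, hy⟩ :=
    (G.isHermitian_adjMatrix ℝ).exists_nonneg_mulVec_eq_sSup_spectrum_smul
      fun i j => by by_cases h : G.Adj i j <;> simp [h]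
  have hS := factorial_mul_eq_eval_fPoly_mul (mul_levelSum_zero hy hd)
    fun m hm => mul_levelSum_succ hy hm
  have hS₀ : levelSum d y 0 ≠ 0 := fun h₀ =>
    hy₀ <| eq_zero_of_levelSum_eq_zero hy_nonneg fun w => by
    rcases le_or_gt w d with hw | hw
    · simpa [h₀, Nat.factorial_ne_zero] using hS w hw
    · exact levelSum_eq_zero_of_le y hw.le
  have hSd := hS d le_rfl
  rw [levelSum_eq_zero_of_le y le_rfl, mul_zero, eq_comm] at hSd
  exact (mul_eq_zero.mp hSd).resolve_right hS₀
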